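/- arXiv:2312.03392 — 3 statements merged into one kernel-verified Lean document; each statement's English description precedes it below -/
import Mathlib

section
/- For a finite normal-form game G with mixed strategy space Σ, the family of graphs {Graph(BR_ε) : ε > 0} forms a basis of neighborhoods of Graph(BR) in Σ × Σ: every open set containing Graph(BR) contains Graph(BR_ε) for some ε > 0. -/
open Finset

/-- The multilinear extension of player `n`'s payoff to mixed-strategy profiles. -/
noncomputable def mixedPay {N : ℕ} {S : Fin N → Type} [∀ i, Fintype (S i)]
    (U : Fin N → (∀ i, S i) → ℝ) (n : Fin N) (σ : ∀ i, S i → ℝ) : ℝ :=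
  ∑ s : ∀ i, S i, (∏ i, σ i (s i)) * U n s

/-- The Dirac (pure) mixed strategy on `a`. -/
def purePt {α : Type} [DecidableEq α] (a : α) : α → ℝ := fun b => if b = a then 1 else 0

/-- The mixed strategy profile space `Σ = ∏ₙ Δ(Sₙ)`, as a subset of the ambient space. -/
def mixedSet {N : ℕ} (S : Fin N → Type) [∀ i, Fintype (S i)] : Set (∀ i, S i → ℝ) :=
  {σ | ∀ i, σ i ∈ stdSimplex ℝ (S i)}

/-- Graph of the best-reply correspondence `BR` of the finite game with payoffs `U`. -/
def brGraph {N : ℕ} {S : Fin N → Type} [∀ i, Fintype (S i)]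
    (U : Fin N → (∀ i, S i) → ℝ) : Set ((∀ i, S i → ℝ) × (∀ i, S i → ℝ)) :=
  {p | p.1 ∈ mixedSet S ∧ p.2 ∈ mixedSet S ∧
    ∀ n, ∀ τ ∈ stdSimplex ℝ (S n),
      mixedPay U n (Function.update p.1 n τ) ≤ mixedPay U n (Function.update p.1 n (p.2 n))}

/-- Graph of the `ε`-best-reply correspondence `BR_ε`. -/
def brEpsGraph {N : ℕ} {S : Fin N → Type} [∀ i, Fintype (S i)] [∀ i, DecidableEq (S i)]
    (U : Fin N → (∀ i, S i) → ℝ) (ε : ℝ) : Set ((∀ i, S i → ℝ) × (∀ i, S i → ℝ)) :=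
  {p | p.1 ∈ mixedSet S ∧ p.2 ∈ mixedSet S ∧
    ∀ n, ∀ s : S n,
      mixedPay U n (Function.update p.1 n (purePt s)) - ε <
        mixedPay U n (Function.update p.1 n (p.2 n))}

/-!
The graphs `Graph(BR_ε)` lie in the closed sets obtained by relaxing their strict inequality to
`≤`, which are compact (they sit in `Σ × Σ`), decrease as `ε ↓ 0`, and intersect in
`Graph(BR)`: the payoff is linear in a player's own strategy, so a profile beating all pure
deviations beats all mixed ones. A decreasing family of compact sets whose intersection lies in
an open set `O` has a member inside `O`.
-/

section Game

variable {N : ℕ} {S : Fin N → Type} [∀ i, Fintype (S i)] (U : Fin N → (∀ i, S i) → ℝ)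

theorem continuous_mixedPay (n : Fin N) : Continuous (mixedPay U n) := by
  unfold mixedPay
  fun_prop

theorem isCompact_mixedSet : IsCompact (mixedSet S) := by
  have : mixedSet S = Set.univ.pi fun i => stdSimplex ℝ (S i) := by
    ext σ
    simp [mixedSet, Set.mem_pi]
  exact this ▸ isCompact_univ_pi fun i => isCompact_stdSimplex ℝ (S i)

variable [∀ i, DecidableEq (S i)]

theorem mixedPay_update_eq_sum_purePt (n : Fin N) (σ : ∀ i, S i → ℝ) (τ : S n → ℝ) :
    mixedPay U n (Function.update σ n τ) =
      ∑ t : S n, τ t * mixedPay U n (Function.update σ n (purePt t)) := by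
  have split (τ : S n → ℝ) : mixedPay U n (Function.update σ n τ) =
      ∑ s : ∀ i, S i, τ (s n) * ((∏ i ∈ univ.erase n, σ i (s i)) * U n s) := by
    refine sum_congr rfl fun s _ => ?_
    rw [← mul_prod_erase univ _ (mem_univ n), Function.update_self, mul_assoc,
      prod_congr rfl fun i hi => by rw [Function.update_of_ne (ne_of_mem_erase hi)]]
  simp only [split, mul_sum]
  rw [sum_comm]
  simp [purePt]

theorem mixedPay_update_le_of_forall_purePt_le {n : Fin N} {σ : ∀ i, S i → ℝ}
    {τ : S n → ℝ} (hτ : τ ∈ stdSimplex ℝ (S n)) {c : ℝ}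
    (h : ∀ t, mixedPay U n (Function.update σ n (purePt t)) ≤ c) :
    mixedPay U n (Function.update σ n τ) ≤ c := by
  rw [mixedPay_update_eq_sum_purePt]
  calc ∑ t, τ t * mixedPay U n (Function.update σ n (purePt t))
      ≤ ∑ t, τ t * c := sum_le_sum fun t _ => mul_le_mul_of_nonneg_left (h t) (hτ.1 t)
    _ = c := by rw [← sum_mul, hτ.2, one_mul]

def brEpsGraphLE (ε : ℝ) : Set ((∀ i, S i → ℝ) × (∀ i, S i → ℝ)) :=
  {p | p.1 ∈ mixedSet S ∧ p.2 ∈ mixedSet S ∧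
    ∀ n, ∀ s : S n,
      mixedPay U n (Function.update p.1 n (purePt s)) - ε ≤
        mixedPay U n (Function.update p.1 n (p.2 n))}

theorem brEpsGraph_subset_brEpsGraphLE (ε : ℝ) : brEpsGraph U ε ⊆ brEpsGraphLE U ε :=
  fun _ ⟨h₁, h₂, h⟩ => ⟨h₁, h₂, fun n s => (h n s).le⟩

theorem brEpsGraphLE_mono {ε δ : ℝ} (hεδ : ε ≤ δ) : brEpsGraphLE U ε ⊆ brEpsGraphLE U δ :=
  fun _ ⟨h₁, h₂, h⟩ => ⟨h₁, h₂, fun n s => by linarith [h n s]⟩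

theorem isClosed_brEpsGraphLE (ε : ℝ) : IsClosed (brEpsGraphLE U ε) := by
  have hmixed : IsClosed (mixedSet S) := isCompact_mixedSet.isClosed
  have hpay (n : Fin N) {f : (∀ i, S i → ℝ) × (∀ i, S i → ℝ) → S n → ℝ} (hf : Continuous f) :
      Continuous fun p => mixedPay U n (Function.update p.1 n (f p)) :=
    (continuous_mixedPay U n).comp (continuous_fst.update n hf)
  simp only [brEpsGraphLE, Set.ofPred_and, Set.ofPred_forall]
  refine (hmixed.preimage continuous_fst).inter ((hmixed.preimage continuous_snd).inter ?_)
  exact isClosed_iInter fun n => isClosed_iInter fun s =>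
    isClosed_le ((hpay n continuous_const).sub continuous_const)
      (hpay n ((continuous_apply n).comp continuous_snd))

theorem isCompact_brEpsGraphLE (ε : ℝ) : IsCompact (brEpsGraphLE U ε) :=
  (isCompact_mixedSet.prod isCompact_mixedSet).of_isClosed_subset (isClosed_brEpsGraphLE U ε)
    fun _ ⟨h₁, h₂, _⟩ => ⟨h₁, h₂⟩

theorem iInter_brEpsGraphLE_subset_brGraph :
    ⋂ ε : Set.Ioi (0 : ℝ), brEpsGraphLE U ε ⊆ brGraph U := by
  intro p hp
  have hp' (ε : ℝ) (hε : 0 < ε) := Set.mem_iInter.mp hp ⟨ε, hε⟩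
  refine ⟨(hp' 1 one_pos).1, (hp' 1 one_pos).2.1, fun n τ hτ => ?_⟩
  refine mixedPay_update_le_of_forall_purePt_le U hτ fun s => ?_
  exact le_of_forall_pos_le_add fun ε hε => by linarith [(hp' ε hε).2.2 n s]

end Game

/-- The graphs `{Graph(BR_ε) : ε > 0}` form a basis of neighborhoods of `Graph(BR)`:
every open set containing `Graph(BR)` contains `Graph(BR_ε)` for some `ε > 0`. -/
theorem stmt_4 {N : ℕ} {S : Fin N → Type} [∀ i, Fintype (S i)] [∀ i, DecidableEq (S i)]
    (U : Fin N → (∀ i, S i) → ℝ) :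
    ∀ O : Set ((∀ i, S i → ℝ) × (∀ i, S i → ℝ)), IsOpen O → brGraph U ⊆ O →
      ∃ ε : ℝ, 0 < ε ∧ brEpsGraph U ε ⊆ O := by
  intro O hO hsub
  have : Nonempty (Set.Ioi (0 : ℝ)) := ⟨⟨1, Set.mem_Ioi.2 one_pos⟩⟩
  have hdir : Directed (· ⊇ ·) fun ε : Set.Ioi (0 : ℝ) => brEpsGraphLE U ε :=
    fun ε δ => ⟨⟨min ε δ, Set.mem_Ioi.2 (lt_min ε.2 δ.2)⟩, brEpsGraphLE_mono U (min_le_left _ _),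
      brEpsGraphLE_mono U (min_le_right _ _)⟩
  obtain ⟨ε, hε⟩ := exists_subset_nhds_of_isCompact' hdir (fun ε => isCompact_brEpsGraphLE U ε)
    (fun ε => isClosed_brEpsGraphLE U ε)
    fun p hp => hO.mem_nhds (hsub (iInter_brEpsGraphLE_subset_brGraph U hp))
  exact ⟨ε, ε.2, (brEpsGraph_subset_brEpsGraphLE U ε).trans hε⟩
end

section
/- With 𝒯 a triangulation of a simplex Σ_n, V its vertex set, β : Σ_n → Δ(V) the barycentric coordinate map and φ : Δ(V) → Σ_n the affine projection, the image β(Σ_n) equals the union of those faces of Δ(V) spanned by vertex sets of simplices of 𝒯; in particular β(Σ_n) is a closed subset of Δ(V) and is the space (union) of a subcomplex of the face complex of Δ(V). -/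
/-- A triangulation of the set `P ⊆ ℝ^m`: a finite collection of (vertex sets of)
affinely independent simplices covering `P`, closed under nonempty faces, whose
pairwise intersections are common faces. -/
structure TriangulationOf {m : ℕ} (P : Set (Fin m → ℝ)) where
  cells : Finset (Finset (Fin m → ℝ))
  nonempty_mem : ∀ T ∈ cells, T.Nonempty
  indep : ∀ T ∈ cells, AffineIndependent ℝ (fun v : {x // x ∈ T} => (v : Fin m → ℝ))
  down_closed : ∀ T ∈ cells, ∀ T' ⊆ T, T'.Nonempty → T' ∈ cells
  covers : (⋃ T ∈ cells, convexHull ℝ (T : Set (Fin m → ℝ))) = P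
  inter_face : ∀ T ∈ cells, ∀ T' ∈ cells,
    convexHull ℝ (T : Set (Fin m → ℝ)) ∩ convexHull ℝ (T' : Set (Fin m → ℝ)) =
      convexHull ℝ ((T : Set (Fin m → ℝ)) ∩ (T' : Set (Fin m → ℝ)))

/-!
If `μ` lies in the face of `Δ(V)` spanned by a cell `T`, then `σ = ∑ μ v • v` lies in
`conv T ⊆ Σ_n`. The carrier `T'` of `σ` (the cell with `σ` in the relative interior of
`conv T'`) is contained in `T`: indeed `σ ∈ conv T ∩ conv T' = conv (T ∩ T')`, and a point of the
relative interior of a simplex has positive barycentric coordinates, so it lies in no proper face.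
Hence `β σ` and `μ` are affine coordinates of `σ` supported on the affinely independent set `T`,
and they coincide. Closedness holds because the image is a finite union of closed faces.
-/

open Topology

section AffineIndependent

variable {k E ι : Type*} [Ring k] [AddCommGroup E] [Module k E]

theorem AffineIndependent.eq_of_support_subset {T : Finset E}
    (hT : AffineIndependent k ((↑) : T → E)) [Fintype ι] {p : ι → E}
    (hp : Function.Injective p) {w₁ w₂ : ι → k}
    (hw₁ : ∀ i, w₁ i ≠ 0 → p i ∈ T) (hw₂ : ∀ i, w₂ i ≠ 0 → p i ∈ T)
    (hw : ∑ i, w₁ i = ∑ i, w₂ i) (hwp : ∑ i, w₁ i • p i = ∑ i, w₂ i • p i) : w₁ = w₂ := by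
  classical
  set s := Finset.univ.filter fun i => p i ∈ T
  have hs : AffineIndependent k fun i : s => p i :=
    hT.comp_embedding (⟨fun i => ⟨p i, (Finset.mem_filter.1 i.2).2⟩,
      fun i j h => Subtype.ext (hp (congrArg Subtype.val h))⟩ : s ↪ T)
  have hsum : ∀ w : ι → k, (∀ i, w i ≠ 0 → p i ∈ T) → ∑ i : s, w i = ∑ i, w i := fun w hw =>
    (Finset.sum_coe_sort s w).trans (Finset.sum_filter_of_ne fun i _ => hw i)
  have hsum_smul : ∀ w : ι → k, (∀ i, w i ≠ 0 → p i ∈ T) →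
      ∑ i : s, w i • p i = ∑ i, w i • p i := fun w hw =>
    (Finset.sum_coe_sort s fun i => w i • p i).trans
      (Finset.sum_filter_of_ne fun i _ h => hw i (left_ne_zero_of_smul h))
  have hs_eq := hs.eq_of_sum_eq_sum (s := Finset.univ) (w₁ := fun i : s => w₁ i)
    (w₂ := fun i : s => w₂ i)
    (by rw [hsum w₁ hw₁, hsum w₂ hw₂, hw]) (by rw [hsum_smul w₁ hw₁, hsum_smul w₂ hw₂, hwp])
  funext i
  by_cases hi : p i ∈ T
  · exact hs_eq ⟨i, Finset.mem_filter.2 ⟨Finset.mem_univ i, hi⟩⟩ (Finset.mem_univ _)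
  · rw [not_imp_comm.1 (hw₁ i) hi, not_imp_comm.1 (hw₂ i) hi]

end AffineIndependent

section IntrinsicInterior

variable {E : Type*} [AddCommGroup E] [Module ℝ E] [TopologicalSpace E]
  [IsTopologicalAddGroup E] [ContinuousSMul ℝ E]

theorem exists_one_lt_lineMap_mem_of_mem_intrinsicInterior {s : Set E} {x y : E}
    (hx : x ∈ intrinsicInterior ℝ s) (hy : y ∈ affineSpan ℝ s) :
    ∃ t : ℝ, 1 < t ∧ AffineMap.lineMap y x t ∈ s := by
  obtain ⟨x, hx', rfl⟩ := mem_intrinsicInterior.1 hx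
  let f : ℝ → affineSpan ℝ s := fun t => ⟨AffineMap.lineMap y x t, AffineMap.lineMap_mem t hy x.2⟩
  have hf : Continuous f := AffineMap.lineMap_continuous.subtype_mk _
  have hf1 : f 1 = x := Subtype.ext (AffineMap.lineMap_apply_one y (x : E))
  have hnear : ∀ᶠ t in 𝓝 1, f t ∈ interior ((↑) ⁻¹' s) :=
    hf.continuousAt.preimage_mem_nhds (hf1 ▸ isOpen_interior.mem_nhds hx')
  obtain ⟨t, ht, ht1⟩ := ((hnear.filter_mono nhdsWithin_le_nhds).and self_mem_nhdsWithin).exists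
    (f := 𝓝[>] (1 : ℝ))
  exact ⟨t, ht1, (interior_subset ht : f t ∈ (↑) ⁻¹' s)⟩

theorem AffineIndependent.pos_of_mem_intrinsicInterior_convexHull {T : Finset E}
    (hT : AffineIndependent ℝ ((↑) : T → E)) {w : E → ℝ} (hw : ∑ y ∈ T, w y = 1)
    (hσ : ∑ y ∈ T, w y • y ∈ intrinsicInterior ℝ (convexHull ℝ (T : Set E))) :
    ∀ v ∈ T, 0 < w v := by
  classical
  intro v hv
  by_contra! hwv
  -- Continuing the segment from `v` through `σ` a little beyond `σ` stays in `conv T`, but the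
  -- coordinate at `v` of the resulting point, `t * w v + (1 - t)` with `t > 1`, is negative.
  obtain ⟨t, ht, hz⟩ := exists_one_lt_lineMap_mem_of_mem_intrinsicInterior hσ
    (subset_affineSpan ℝ _ (subset_convexHull ℝ _ (Finset.mem_coe.2 hv)))
  obtain ⟨w', hw'₀, hw'₁, hw'z⟩ := Finset.mem_convexHull'.1 hz
  set u : E → ℝ := fun y => t * w y + (1 - t) * if y = v then 1 else 0
  have hu₁ : ∑ y ∈ T, u y = 1 := by
    simp [u, Finset.sum_add_distrib, ← Finset.mul_sum, hw, hv]
  have hu : ∑ y ∈ T, u y • y = AffineMap.lineMap v (∑ y ∈ T, w y • y) t := by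
    simp [u, add_smul, mul_smul, Finset.sum_add_distrib, ← Finset.smul_sum,
      AffineMap.lineMap_apply_module, hv, add_comm]
  have hw'v := hT.eq_of_sum_eq_sum_subtype (hw'₁.trans hu₁.symm) (hw'z.trans hu.symm) v hv
  have := hw'₀ v hv
  simp only [hw'v, u, if_pos] at this
  nlinarith

theorem AffineIndependent.subset_of_mem_convexHull_of_mem_intrinsicInterior {T S : Finset E}
    (hT : AffineIndependent ℝ ((↑) : T → E)) (hST : S ⊆ T) {σ : E}
    (hσS : σ ∈ convexHull ℝ (S : Set E))
    (hσT : σ ∈ intrinsicInterior ℝ (convexHull ℝ (T : Set E))) : T ⊆ S := by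
  obtain ⟨w, -, hw₁, hwσ⟩ := Finset.mem_convexHull'.1 hσS
  have hwσ' : ∑ y ∈ T, (S : Set E).indicator w y • y = σ := by
    rw [← hwσ, ← Finset.sum_indicator_subset _ hST]
    exact Finset.sum_congr rfl fun y _ => (Set.indicator_smul_apply_left _ _ id y).symm
  have hpos := hT.pos_of_mem_intrinsicInterior_convexHull (w := (S : Set E).indicator w)
    (by rwa [Finset.sum_indicator_subset _ hST]) (hwσ' ▸ hσT)
  intro y hy
  by_contra hyS
  simpa [Set.indicator_of_notMem (Finset.mem_coe.not.2 hyS)] using hpos y hy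

end IntrinsicInterior

theorem TriangulationOf.subset_of_mem_convexHull_of_mem_intrinsicInterior {m : ℕ}
    {P : Set (Fin m → ℝ)} (𝒯 : TriangulationOf P) {T T' : Finset (Fin m → ℝ)}
    (hT : T ∈ 𝒯.cells) (hT' : T' ∈ 𝒯.cells) {σ : Fin m → ℝ}
    (hσT : σ ∈ convexHull ℝ (T : Set (Fin m → ℝ)))
    (hσT' : σ ∈ intrinsicInterior ℝ (convexHull ℝ (T' : Set (Fin m → ℝ)))) : T' ⊆ T := by
  have hσ : σ ∈ convexHull ℝ ((T ∩ T' : Finset (Fin m → ℝ)) : Set (Fin m → ℝ)) := by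
    rw [Finset.coe_inter, ← 𝒯.inter_face T hT T' hT']
    exact ⟨hσT, intrinsicInterior_subset hσT'⟩
  exact ((𝒯.indep T' hT').subset_of_mem_convexHull_of_mem_intrinsicInterior
    Finset.inter_subset_right hσ hσT').trans Finset.inter_subset_left

def stdSimplexFace (ι : Type*) [Fintype ι] (W : Set ι) : Set (ι → ℝ) :=
  {μ | μ ∈ stdSimplex ℝ ι ∧ ∀ i, μ i ≠ 0 → i ∈ W}

theorem isClosed_stdSimplexFace (ι : Type*) [Fintype ι] (W : Set ι) :
    IsClosed (stdSimplexFace ι W) := by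
  rw [stdSimplexFace, Set.ofPred_and, Set.ofPred_mem_eq, Set.ofPred_forall]
  refine (isClosed_stdSimplex ℝ ι).inter (isClosed_iInter fun i => ?_)
  by_cases hi : i ∈ W
  · simp [hi]
  · simpa [hi] using isClosed_eq (continuous_apply i) continuous_const

theorem TriangulationOf.mem_image_of_mem_stdSimplexFace {m : ℕ} {P : Set (Fin m → ℝ)}
    (𝒯 : TriangulationOf P) {V : Finset (Fin m → ℝ)} {β : (Fin m → ℝ) → (V → ℝ)}
    (hβ1 : ∀ σ ∈ P, β σ ∈ stdSimplex ℝ V)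
    (hβ2 : ∀ σ ∈ P, ∃ T ∈ 𝒯.cells, σ ∈ intrinsicInterior ℝ (convexHull ℝ (T : Set (Fin m → ℝ))) ∧
      ∀ v : V, β σ v ≠ 0 → (v : Fin m → ℝ) ∈ T)
    (hβ3 : ∀ σ ∈ P, ∑ v : V, β σ v • (v : Fin m → ℝ) = σ)
    {T : Finset (Fin m → ℝ)} (hT : T ∈ 𝒯.cells) {μ : V → ℝ}
    (hμ : μ ∈ stdSimplexFace V {v | (v : Fin m → ℝ) ∈ T}) : μ ∈ β '' P := by
  set σ := ∑ v : V, μ v • (v : Fin m → ℝ)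
  have hσT : σ ∈ convexHull ℝ (T : Set (Fin m → ℝ)) := by
    have := (convex_convexHull ℝ (T : Set (Fin m → ℝ))).finsum_mem hμ.1.1
      (by rw [finsum_eq_sum_of_fintype]; exact hμ.1.2) fun v hv => subset_convexHull ℝ _ (hμ.2 v hv)
    rwa [finsum_eq_sum_of_fintype] at this
  have hσ : σ ∈ P := 𝒯.covers ▸ Set.mem_biUnion hT hσT
  obtain ⟨T', hT', hσT', hβT'⟩ := hβ2 σ hσ
  have hT'T := 𝒯.subset_of_mem_convexHull_of_mem_intrinsicInterior hT hT' hσT hσT'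
  refine ⟨σ, hσ, (𝒯.indep T hT).eq_of_support_subset Subtype.val_injective
    (fun v hv => hT'T (hβT' v hv)) hμ.2 ?_ (hβ3 σ hσ)⟩
  rw [(hβ1 σ hσ).2, hμ.1.2]

theorem stmt_6_general {k : ℕ} (𝒯 : TriangulationOf (stdSimplex ℝ (Fin k)))
    (V : Finset (Fin k → ℝ))
    (β : (Fin k → ℝ) → ({x // x ∈ V} → ℝ))
    (hβ1 : ∀ σ ∈ stdSimplex ℝ (Fin k), β σ ∈ stdSimplex ℝ {x // x ∈ V})
    (hβ2 : ∀ σ ∈ stdSimplex ℝ (Fin k), ∃ T ∈ 𝒯.cells,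
      σ ∈ intrinsicInterior ℝ (convexHull ℝ (T : Set (Fin k → ℝ))) ∧
      ∀ v : {x // x ∈ V}, β σ v ≠ 0 → (v : Fin k → ℝ) ∈ T)
    (hβ3 : ∀ σ ∈ stdSimplex ℝ (Fin k),
      (∑ v : {x // x ∈ V}, β σ v • (v : Fin k → ℝ)) = σ) :
    (β '' stdSimplex ℝ (Fin k) =
      ⋃ T ∈ 𝒯.cells, {μ : {x // x ∈ V} → ℝ | μ ∈ stdSimplex ℝ {x // x ∈ V} ∧
        ∀ v : {x // x ∈ V}, μ v ≠ 0 → (v : Fin k → ℝ) ∈ T}) ∧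
    IsClosed (β '' stdSimplex ℝ (Fin k)) := by
  have himage : β '' stdSimplex ℝ (Fin k) =
      ⋃ T ∈ 𝒯.cells, stdSimplexFace {x // x ∈ V} {v | (v : Fin k → ℝ) ∈ T} := by
    refine Set.Subset.antisymm ?_ fun μ hμ => ?_
    · rintro _ ⟨σ, hσ, rfl⟩
      obtain ⟨T, hT, -, hsupp⟩ := hβ2 σ hσ
      exact Set.mem_biUnion hT ⟨hβ1 σ hσ, hsupp⟩
    · obtain ⟨T, hT, hμT⟩ := Set.mem_iUnion₂.1 hμ
      exact 𝒯.mem_image_of_mem_stdSimplexFace hβ1 hβ2 hβ3 hT hμT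
  exact ⟨himage, himage ▸ isClosed_biUnion_finset fun T _ => isClosed_stdSimplexFace _ _⟩

/-- the image of the barycentric coordinate map `β` equals the union of
the faces of `Δ(V)` spanned by vertex sets of simplices of the triangulation `𝒯`;
in particular it is closed in `Δ(V)` (it is the space of a subcomplex of the face
complex of `Δ(V)`). -/
theorem stmt_6 {k : ℕ} (𝒯 : TriangulationOf (stdSimplex ℝ (Fin k)))
    (V : Finset (Fin k → ℝ))
    (hV : (V : Set (Fin k → ℝ)) = ⋃ T ∈ 𝒯.cells, (T : Set (Fin k → ℝ)))
    (β : (Fin k → ℝ) → ({x // x ∈ V} → ℝ))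
    (hβ1 : ∀ σ ∈ stdSimplex ℝ (Fin k), β σ ∈ stdSimplex ℝ {x // x ∈ V})
    (hβ2 : ∀ σ ∈ stdSimplex ℝ (Fin k), ∃ T ∈ 𝒯.cells,
      σ ∈ intrinsicInterior ℝ (convexHull ℝ (T : Set (Fin k → ℝ))) ∧
      ∀ v : {x // x ∈ V}, β σ v ≠ 0 → (v : Fin k → ℝ) ∈ T)
    (hβ3 : ∀ σ ∈ stdSimplex ℝ (Fin k),
      (∑ v : {x // x ∈ V}, β σ v • (v : Fin k → ℝ)) = σ) :
    (β '' stdSimplex ℝ (Fin k) =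
      ⋃ T ∈ 𝒯.cells, {μ : {x // x ∈ V} → ℝ | μ ∈ stdSimplex ℝ {x // x ∈ V} ∧
        ∀ v : {x // x ∈ V}, μ v ≠ 0 → (v : Fin k → ℝ) ∈ T}) ∧
    IsClosed (β '' stdSimplex ℝ (Fin k)) :=
  stmt_6_general 𝒯 V β hβ1 hβ2 hβ3
end

section
/- Let h : V → ℝ be a height function on the vertex set V of a regular triangulation 𝒯 of a simplex Δ: for each maximal simplex with vertex set {p₀,…,p_m} of 𝒯, the lifted points (p_t, h(p_t)) span a non-vertical hyperplane in ℝ^{m+1} × ℝ and all other lifted vertices (p, h(p)) lie strictly above this hyperplane. Then for sufficiently small ε > 0, if each vertex p is replaced by p(ε) = (1−ε)p + ε v_p where v_p lies in the relative interior of the carrier face of p in Δ, the perturbed configuration with heights h(p(ε)) := h(p) again satisfies the regularity condition: each perturbed maximal cell's lifted vertices span a non-vertical hyperplane with all other lifted perturbed vertices strictly above it. -/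
/-- The affine map `x ↦ ∑ i, a i * x i`. -/
noncomputable def linA {n : ℕ} (a : Fin n → ℝ) : (Fin n → ℝ) →ᵃ[ℝ] ℝ :=
  (∑ i, a i • LinearMap.proj (R := ℝ) (φ := fun _ : Fin n => ℝ) i).toAffineMap

lemma linA_apply {n : ℕ} (a x : Fin n → ℝ) : linA a x = ∑ i, a i * x i := by
  simp [linA]

lemma affine_dot {n : ℕ} (ℓ : (Fin n → ℝ) →ᵃ[ℝ] ℝ) (x : Fin n → ℝ) (hx : ∑ i, x i = 1) :
    ∑ i, ℓ (Pi.single i 1) * x i = ℓ x := by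
  have hd : ∀ y : Fin n → ℝ, ℓ y = ℓ.linear y + ℓ 0 := fun y => by
    simpa using ℓ.map_vadd 0 y
  have hx' : ∑ i, x i • (Pi.single i 1 : Fin n → ℝ) = x := by
    funext j
    rw [Finset.sum_apply]
    simp [Pi.single_apply]
  calc ∑ i, ℓ (Pi.single i 1) * x i
      = (∑ i, x i • ℓ.linear (Pi.single i 1)) + (∑ i, x i) * ℓ 0 := by
        rw [Finset.sum_mul, ← Finset.sum_add_distrib]
        exact Finset.sum_congr rfl fun i _ => by rw [hd]; simp [smul_eq_mul]; ring
    _ = ℓ.linear x + ℓ 0 := by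
        rw [hx, one_mul]
        congr 1
        calc ∑ i, x i • ℓ.linear (Pi.single i 1)
            = ℓ.linear (∑ i, x i • (Pi.single i 1 : Fin n → ℝ)) := by
              rw [map_sum]
              exact Finset.sum_congr rfl fun i _ => (ℓ.linear.map_smul _ _).symm
          _ = ℓ.linear x := by rw [hx']
    _ = ℓ x := (hd x).symm

/-- stability of regularity of a triangulation under vertex
perturbation toward points with the same carrier. `h` is a height function
certifying regularity of the triangulation `𝒯` of the standard `m`-simplex: each
maximal cell's lifted vertices lie on the graph of an affine function with all other
lifted vertices strictly above it. If each vertex `p` is moved to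
`p(ε) = (1−ε)•p + ε•(vmap p)` where `vmap p` lies in the relative interior of the
carrier face of `p` in the simplex (same support), then for all sufficiently small
`ε > 0` the perturbed lifted configuration again satisfies the regularity condition. -/
theorem stmt_11 {m : ℕ} (𝒯 : TriangulationOf (stdSimplex ℝ (Fin (m + 1))))
    (V : Finset (Fin (m + 1) → ℝ))
    (hV : (V : Set (Fin (m + 1) → ℝ)) = ⋃ T ∈ 𝒯.cells, (T : Set (Fin (m + 1) → ℝ)))
    (h : (Fin (m + 1) → ℝ) → ℝ)
    (hreg : ∀ T ∈ 𝒯.cells, T.card = m + 1 →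
      ∃ ℓ : (Fin (m + 1) → ℝ) →ᵃ[ℝ] ℝ,
        (∀ p ∈ T, ℓ p = h p) ∧ ∀ p ∈ V, p ∉ T → ℓ p < h p)
    (vmap : (Fin (m + 1) → ℝ) → (Fin (m + 1) → ℝ))
    (hvmap : ∀ p ∈ V, vmap p ∈ stdSimplex ℝ (Fin (m + 1)) ∧
      {i | vmap p i ≠ 0} = {i | p i ≠ 0}) :
    ∃ ε₀ : ℝ, 0 < ε₀ ∧ ∀ ε : ℝ, 0 < ε → ε < ε₀ →
      ∀ T ∈ 𝒯.cells, T.card = m + 1 →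
        ∃ ℓ : (Fin (m + 1) → ℝ) →ᵃ[ℝ] ℝ,
          (∀ p ∈ T, ℓ ((1 - ε) • p + ε • vmap p) = h p) ∧
          ∀ p ∈ V, p ∉ T → ℓ ((1 - ε) • p + ε • vmap p) < h p := by
  classical
  have hcell_sub : ∀ T ∈ 𝒯.cells, ∀ x ∈ T, x ∈ stdSimplex ℝ (Fin (m+1)) := by
    intro T hT x hx
    rw [← 𝒯.covers]
    exact Set.mem_biUnion hT (subset_convexHull ℝ _ hx)
  have hVstd : ∀ p ∈ V, p ∈ stdSimplex ℝ (Fin (m+1)) := by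
    intro p hp
    have hp' : p ∈ (⋃ T ∈ 𝒯.cells, (T : Set (Fin (m+1) → ℝ))) := hV ▸ hp
    simp only [Set.mem_iUnion] at hp'
    obtain ⟨T, hT, hpT⟩ := hp'
    exact hcell_sub T hT p hpT
  have key : ∀ T ∈ 𝒯.cells, ∀ᶠ ε : ℝ in nhds 0, T.card = m + 1 →
      ∃ ℓ : (Fin (m + 1) → ℝ) →ᵃ[ℝ] ℝ,
        (∀ p ∈ T, ℓ ((1 - ε) • p + ε • vmap p) = h p) ∧
        ∀ p ∈ V, p ∉ T → ℓ ((1 - ε) • p + ε • vmap p) < h p := by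
    intro T hT
    by_cases hcard : T.card = m + 1
    swap
    · exact Filter.Eventually.of_forall fun ε hc => absurd hc hcard
    obtain ⟨ℓ₀, hEq, hLt⟩ := hreg T hT hcard
    set e := Finset.equivFinOfCardEq hcard with he
    set q : Fin (m+1) → (Fin (m+1) → ℝ) := fun t => ((e.symm t : T) : Fin (m+1) → ℝ) with hq
    have hqT : ∀ t, q t ∈ T := fun t => (e.symm t).2
    have hqstd : ∀ t, q t ∈ stdSimplex ℝ (Fin (m+1)) := fun t => hcell_sub T hT _ (hqT t)
    set M : ℝ → Matrix (Fin (m+1)) (Fin (m+1)) ℝ :=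
      fun ε => Matrix.of fun t i => (1-ε) * q t i + ε * vmap (q t) i with hM
    have hM0 : ∀ t, M 0 t = q t := fun t => by funext i; simp [hM]
    have hindep : AffineIndependent ℝ q :=
      AffineIndependent.comp_embedding e.symm.toEmbedding (𝒯.indep T hT)
    have hli : LinearIndependent ℝ (fun t => M 0 t) := by
      rw [Fintype.linearIndependent_iff]
      intro g hg
      simp only [hM0] at hg
      have hsum : ∑ t, g t = 0 := by
        calc ∑ t, g t = ∑ t, g t * ∑ i, q t i :=
              Finset.sum_congr rfl fun t _ => by rw [(hqstd t).2, mul_one]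
          _ = ∑ i, ∑ t, g t * q t i := by
              simp_rw [Finset.mul_sum]; rw [Finset.sum_comm]
          _ = ∑ i : Fin (m+1), (0:ℝ) := Finset.sum_congr rfl fun i _ => by
              have := congrFun hg i
              simpa [Finset.sum_apply] using this
          _ = 0 := by simp
      intro t
      exact affineIndependent_iff.1 hindep Finset.univ g hsum hg t (Finset.mem_univ t)
    have hunit : IsUnit (M 0) := Matrix.linearIndependent_rows_iff_isUnit.1 hli
    have hdet0 : (M 0).det ≠ 0 := ((Matrix.isUnit_iff_isUnit_det _).1 hunit).ne_zero
    have hMcont : Continuous M := by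
      apply continuous_pi; intro t; apply continuous_pi; intro i
      show Continuous fun ε : ℝ => (1-ε) * q t i + ε * vmap (q t) i
      fun_prop
    set b : Fin (m+1) → ℝ := fun t => h (q t) with hb
    set a : ℝ → (Fin (m+1) → ℝ) := fun ε => (M ε)⁻¹.mulVec b with ha
    have haeq : a = fun ε => ((M ε).det)⁻¹ • ((M ε).adjugate.mulVec b) := by
      funext ε
      rw [ha]
      show (M ε)⁻¹.mulVec b = _
      rw [Matrix.inv_def, Ring.inverse_eq_inv', Matrix.smul_mulVec]
    have hacont : ContinuousAt a 0 := by
      rw [haeq]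
      exact ((hMcont.matrix_det.continuousAt).inv₀ hdet0).smul
        ((hMcont.matrix_adjugate.matrix_mulVec continuous_const).continuousAt)
    set atil : Fin (m+1) → ℝ := fun i => ℓ₀ (Pi.single i 1) with hatil
    have hMv : (M 0).mulVec atil = b := by
      funext t
      have h1 : ((M 0).mulVec atil) t = ∑ i, q t i * atil i := by
        simp [Matrix.mulVec, dotProduct, hM0]
      rw [h1]
      calc ∑ i, q t i * atil i = ∑ i, ℓ₀ (Pi.single i 1) * q t i := by
            exact Finset.sum_congr rfl fun i _ => mul_comm _ _
        _ = ℓ₀ (q t) := affine_dot ℓ₀ (q t) (hqstd t).2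
        _ = h (q t) := hEq _ (hqT t)
    have ha0 : a 0 = atil := by
      rw [ha]
      show (M 0)⁻¹.mulVec b = atil
      rw [← hMv, Matrix.mulVec_mulVec,
        Matrix.nonsing_inv_mul _ (isUnit_iff_ne_zero.2 hdet0), Matrix.one_mulVec]
    have hev1 : ∀ᶠ ε in nhds (0:ℝ), (M ε).det ≠ 0 :=
      (hMcont.matrix_det.continuousAt).eventually_ne hdet0
    have hev2 : ∀ᶠ ε in nhds (0:ℝ), ∀ p ∈ V, p ∉ T →
        (∑ i, a ε i * ((1-ε) * p i + ε * vmap p i)) < h p := by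
      rw [Finset.eventually_all]
      intro p hp
      by_cases hpT : p ∈ T
      · exact Filter.Eventually.of_forall fun ε hc => absurd hpT hc
      have hG : ContinuousAt (fun ε => ∑ i, a ε i * ((1-ε) * p i + ε * vmap p i)) 0 := by
        refine tendsto_finset_sum _ fun i _ => ContinuousAt.mul ?_ ?_
        · exact (continuous_apply i).continuousAt.comp hacont
        · exact ContinuousAt.add (by fun_prop) (by fun_prop)
      have hG0 : (∑ i, a 0 i * ((1-(0:ℝ)) * p i + 0 * vmap p i)) < h p := by
        have h2 : ∑ i, a 0 i * p i = ℓ₀ p := by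
          rw [ha0]
          calc ∑ i, atil i * p i = ∑ i, ℓ₀ (Pi.single i 1) * p i := rfl
            _ = ℓ₀ p := affine_dot ℓ₀ p (hVstd p hp).2
        calc ∑ i, a 0 i * ((1-(0:ℝ)) * p i + 0 * vmap p i) = ∑ i, a 0 i * p i := by
              refine Finset.sum_congr rfl fun i _ => by ring
          _ = ℓ₀ p := h2
          _ < h p := hLt p hp hpT
      exact (hG.eventually_lt continuousAt_const hG0).mono fun ε hlt _ => hlt
    filter_upwards [hev1, hev2] with ε hdet hlt
    intro _
    refine ⟨linA (a ε), ?_, ?_⟩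
    · intro p hp
      have hpq : q (e ⟨p, hp⟩) = p := by rw [hq]; simp
      set t := e ⟨p, hp⟩ with ht
      have hMa : (M ε).mulVec (a ε) = b := by
        rw [ha]
        show (M ε).mulVec ((M ε)⁻¹.mulVec b) = b
        rw [Matrix.mulVec_mulVec, Matrix.mul_nonsing_inv _ (isUnit_iff_ne_zero.2 hdet),
          Matrix.one_mulVec]
      have hMa' := congrFun hMa t
      rw [linA_apply]
      calc ∑ i, a ε i * ((1 - ε) • p + ε • vmap p) i
          = ∑ i, M ε t i * a ε i := by
            refine Finset.sum_congr rfl fun i _ => ?_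
            have : M ε t i = (1-ε) * p i + ε * vmap p i := by rw [hM]; simp [hpq]
            rw [this]
            show a ε i * ((1-ε) * p i + ε * vmap p i) = _
            ring
        _ = b t := by
            rw [← hMa']
            simp [Matrix.mulVec, dotProduct]
        _ = h p := by rw [hb]; simp [hpq]
    · intro p hp hpT
      rw [linA_apply]
      exact hlt p hp hpT
  have hall : ∀ᶠ ε in nhds (0:ℝ), ∀ T ∈ 𝒯.cells, T.card = m + 1 →
      ∃ ℓ : (Fin (m + 1) → ℝ) →ᵃ[ℝ] ℝ,
        (∀ p ∈ T, ℓ ((1 - ε) • p + ε • vmap p) = h p) ∧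
        ∀ p ∈ V, p ∉ T → ℓ ((1 - ε) • p + ε • vmap p) < h p :=
    (Filter.eventually_all_finset 𝒯.cells).2 key
  obtain ⟨δ, hδ, hδ'⟩ := Metric.eventually_nhds_iff.1 hall
  refine ⟨δ, hδ, fun ε hε hεδ => ?_⟩
  exact hδ' (by rw [Real.dist_eq, sub_zero, abs_of_pos hε]; exact hεδ)
end
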